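/- For the n-qubit pure product state of t T-states and n−t zero states, |ψ_t⟩ = |T⟩^{⊗t} ⊗ |0⟩^{⊗(n−t)} with 0 ≤ t ≤ n, the third Pauli spectrum moment equals A_3(|ψ_t⟩⟨ψ_t|) = (5/8)^t; equivalently −(1/2) ln A_3(|ψ_t⟩⟨ψ_t|) = (t/2) ln(8/5). -/

import Mathlib

open Matrix Complex BigOperators
open scoped ComplexOrder

noncomputable section

/-- Index type for `n` qubits: functions `Fin n → Fin 2` (cardinality `2^n`). -/
abbrev QIdx (n : ℕ) := Fin n → Fin 2

/-- The four single-qubit Pauli matrices: `σ⁰ = I`, `σ¹ = σˣ`, `σ² = σᶻ`, `σ³ = σʸ`. -/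
def pauliMat : Fin 4 → Matrix (Fin 2) (Fin 2) ℂ
  | 0 => 1
  | 1 => !![0, 1; 1, 0]
  | 2 => !![1, 0; 0, -1]
  | 3 => !![0, -Complex.I; Complex.I, 0]

/-- The Pauli string `σ^{a_1} ⊗ ⋯ ⊗ σ^{a_n}` as a `2^n × 2^n` matrix. -/
def pauliString {n : ℕ} (a : Fin n → Fin 4) : Matrix (QIdx n) (QIdx n) ℂ :=
  fun i j => ∏ k, pauliMat (a k) (i k) (j k)

/-- An `n`-qubit state: positive semidefinite with unit trace. -/
def IsState {n : ℕ} (ρ : Matrix (QIdx n) (QIdx n) ℂ) : Prop :=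
  ρ.PosSemidef ∧ ρ.trace = 1

/-- The `α`-moment of the Pauli spectrum `A_α(ρ) = 2^{-n} ∑_P |tr(ρP)|^{2α}`. -/
def Amom {n : ℕ} (α : ℝ) (ρ : Matrix (QIdx n) (QIdx n) ℂ) : ℝ :=
  ((2:ℝ)^n)⁻¹ * ∑ a : Fin n → Fin 4, (‖(ρ * pauliString a).trace‖) ^ (2 * α)

/-- The 2-Rényi entropy `S₂(ρ) = -ln tr(ρ²)`. -/
def S2 {n : ℕ} (ρ : Matrix (QIdx n) (QIdx n) ℂ) : ℝ :=
  - Real.log ((ρ * ρ).trace.re)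

/-- The magic witness `W_α(ρ) = (1/(1-α)) ln A_α(ρ) - ((1-2α)/(1-α)) S₂(ρ)`. -/
def Wit {n : ℕ} (α : ℝ) (ρ : Matrix (QIdx n) (QIdx n) ℂ) : ℝ :=
  (1 / (1 - α)) * Real.log (Amom α ρ) - ((1 - 2*α)/(1 - α)) * S2 ρ

/-- The stabilizer norm `D(ρ) = A_{1/2}(ρ) = 2^{-n} ∑_P |tr(ρP)|`. -/
def Dnorm {n : ℕ} (ρ : Matrix (QIdx n) (QIdx n) ℂ) : ℝ :=
  Amom (1/2) ρ

/-- A Clifford unitary: unitary mapping every Pauli string to `±` a Pauli string. -/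
def IsCliffordUnitary {n : ℕ} (U : Matrix (QIdx n) (QIdx n) ℂ) : Prop :=
  U ∈ Matrix.unitaryGroup (QIdx n) ℂ ∧
    ∀ a : Fin n → Fin 4, ∃ (b : Fin n → Fin 4) (ε : ℝ),
      (ε = 1 ∨ ε = -1) ∧ U * pauliString a * Uᴴ = (ε : ℂ) • pauliString b

/-- The computational all-zeros basis vector `|0⟩^{⊗n}`. -/
def zeroVec (n : ℕ) : QIdx n → ℂ :=
  fun i => if (∀ k, i k = 0) then 1 else 0

/-- A pure stabilizer state vector: `U|0⟩^{⊗n}` for a Clifford unitary `U`. -/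
def IsPureStab {n : ℕ} (ψ : QIdx n → ℂ) : Prop :=
  ∃ U, IsCliffordUnitary U ∧ ψ = U.mulVec (zeroVec n)

/-- The rank-one projector `|ψ⟩⟨ψ|`. -/
def proj {n : ℕ} (ψ : QIdx n → ℂ) : Matrix (QIdx n) (QIdx n) ℂ :=
  Matrix.vecMulVec ψ (star ψ)

/-- A mixed stabilizer state: a finite convex combination of pure stabilizer projectors. -/
def IsMixedStab {n : ℕ} (ρ : Matrix (QIdx n) (QIdx n) ℂ) : Prop :=
  ∃ (k : ℕ) (p : Fin k → ℝ) (ψ : Fin k → QIdx n → ℂ),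
    (∀ i, 0 ≤ p i) ∧ (∑ i, p i = 1) ∧ (∀ i, IsPureStab (ψ i)) ∧
    ρ = ∑ i, (p i : ℂ) • proj (ψ i)

/-- The set of values `ln ∑ᵢ |xᵢ|` over finite real stabilizer decompositions of `ρ`. -/
def StabDecomps {n : ℕ} (ρ : Matrix (QIdx n) (QIdx n) ℂ) : Set ℝ :=
  { r | ∃ (k : ℕ) (x : Fin k → ℝ) (ψ : Fin k → QIdx n → ℂ),
      (∀ i, IsPureStab (ψ i)) ∧ ρ = ∑ i, (x i : ℂ) • proj (ψ i) ∧
      r = Real.log (∑ i, |x i|) }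

/-- The log-free robustness of magic. -/
def LR {n : ℕ} (ρ : Matrix (QIdx n) (QIdx n) ℂ) : ℝ := sInf (StabDecomps ρ)

open Classical in
/-- Positive-semidefinite square root (junk value `0` off the PSD cone). -/
def psdSqrt {n : ℕ} (A : Matrix (QIdx n) (QIdx n) ℂ) : Matrix (QIdx n) (QIdx n) ℂ :=
  if h : A.PosSemidef then
    (h.1.eigenvectorUnitary : Matrix (QIdx n) (QIdx n) ℂ) *
      Matrix.diagonal (fun i => ((Real.sqrt (h.1.eigenvalues i) : ℝ) : ℂ)) *
      (star h.1.eigenvectorUnitary : Matrix (QIdx n) (QIdx n) ℂ)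
  else 0

/-- The Uhlmann fidelity `F(ρ,σ) = (tr √(√ρ σ √ρ))²`. -/
def fidelity {n : ℕ} (ρ σ : Matrix (QIdx n) (QIdx n) ℂ) : ℝ :=
  ((psdSqrt (psdSqrt ρ * σ * psdSqrt ρ)).trace.re) ^ 2

/-- The stabilizer fidelity `D_F(ρ) = inf { -ln F(ρ,σ) : σ a mixed stabilizer state }`. -/
def DF {n : ℕ} (ρ : Matrix (QIdx n) (QIdx n) ℂ) : ℝ :=
  sInf { r | ∃ σ, IsMixedStab σ ∧ r = - Real.log (fidelity ρ σ) }

/-- Filtered Pauli moment `Ã_α(ρ) = (2^n A_α(ρ) - 1)/(2^n - 1)`. -/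
def Atil {n : ℕ} (α : ℝ) (ρ : Matrix (QIdx n) (QIdx n) ℂ) : ℝ :=
  ((2:ℝ)^n * Amom α ρ - 1) / ((2:ℝ)^n - 1)

/-- Filtered stabilizer norm `D̃(ρ) = (2^n D(ρ) - 1)/(2^n - 1)`. -/
def Dtil {n : ℕ} (ρ : Matrix (QIdx n) (QIdx n) ℂ) : ℝ :=
  ((2:ℝ)^n * Dnorm ρ - 1) / ((2:ℝ)^n - 1)

/-- Filtered magic witness `W̃_α(ρ) = (1/(1-α)) ln Ã_α(ρ) + ((1-2α)/(1-α)) ln Ã₁(ρ)`. -/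
def Wtil {n : ℕ} (α : ℝ) (ρ : Matrix (QIdx n) (QIdx n) ℂ) : ℝ :=
  (1/(1-α)) * Real.log (Atil α ρ) + ((1 - 2*α)/(1-α)) * Real.log (Atil 1 ρ)

/-- The maximally mixed state `I/2^n`. -/
def maxMixed (n : ℕ) : Matrix (QIdx n) (QIdx n) ℂ := ((2:ℂ)^n)⁻¹ • 1

/-- The single-qubit T-state vector `|T⟩ = (|0⟩ + e^{-iπ/4}|1⟩)/√2`. -/
def Tket : QIdx 1 → ℂ :=
  fun i => if i 0 = 0 then (Real.sqrt 2 : ℂ)⁻¹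
           else Complex.exp (-(Real.pi/4 : ℂ) * Complex.I) * (Real.sqrt 2 : ℂ)⁻¹

/-- The depolarized T-state `ρ_p = (1-p)|T⟩⟨T| + p·I₂/2`. -/
def rhoDep (p : ℝ) : Matrix (QIdx 1) (QIdx 1) ℂ :=
  ((1 - p : ℝ) : ℂ) • proj Tket + ((p : ℝ) : ℂ) • (((2:ℂ))⁻¹ • 1)


/-- The product state vector `|ψ_t⟩ = |T⟩^{⊗t} ⊗ |0⟩^{⊗(n-t)}` on `n` qubits. -/
def psiTprod (n t : ℕ) : QIdx n → ℂ :=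
  fun i => ∏ k : Fin n,
    if (k : ℕ) < t then
      (if i k = 0 then (Real.sqrt 2 : ℂ)⁻¹
       else Complex.exp (-(Real.pi/4 : ℂ) * Complex.I) * (Real.sqrt 2 : ℂ)⁻¹)
    else (if i k = 0 then 1 else 0)

/-! The Pauli expectations of a product vector factor over its qubits, so the sum over Pauli
strings of `|tr(ρP)|^6` is the product over qubits of single-qubit sums. The Pauli vector of `|0⟩`
is `(1, 0, 1, 0)`, contributing `2`; that of `|T⟩` is `(1, 1/√2, 0, -1/√2)`, contributing
`1 + 2 · (1/8) = 5/4`. Hence `A₃ = 2⁻ⁿ (5/4)ᵗ 2ⁿ⁻ᵗ = (5/8)ᵗ`. -/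

def pauliExpect (φ : Fin 2 → ℂ) (b : Fin 4) : ℂ :=
  (vecMulVec φ (star φ) * pauliMat b).trace

theorem pauliExpect_apply (φ : Fin 2 → ℂ) (b : Fin 4) :
    pauliExpect φ b = ∑ x, ∑ y, φ x * star (φ y) * pauliMat b y x := by
  simp [pauliExpect, Matrix.trace, Matrix.mul_apply, vecMulVec_apply]

theorem trace_proj_prod_mul_pauliString {n : ℕ} (φ : Fin n → Fin 2 → ℂ) (a : Fin n → Fin 4) :
    (proj (fun i : QIdx n => ∏ k, φ k (i k)) * pauliString a).trace =
      ∏ k, pauliExpect (φ k) (a k) := by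
  simp only [pauliExpect, proj, Matrix.trace, Matrix.diag, Matrix.mul_apply, vecMulVec_apply,
    Pi.star_apply, pauliString, star_prod, Fintype.prod_sum]
  refine Finset.sum_congr rfl fun i _ => Finset.sum_congr rfl fun j _ => ?_
  simp only [Finset.prod_mul_distrib]

theorem amom_proj_prod {n : ℕ} (α : ℝ) (φ : Fin n → Fin 2 → ℂ) :
    Amom α (proj (fun i : QIdx n => ∏ k, φ k (i k))) =
      ((2 : ℝ) ^ n)⁻¹ * ∏ k, ∑ b, ‖pauliExpect (φ k) b‖ ^ (2 * α) := by
  simp only [Amom, trace_proj_prod_mul_pauliString, norm_prod,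
    Real.finsetProd_rpow _ _ (fun _ _ => norm_nonneg _), Fintype.prod_sum]

theorem Fin.prod_ite_val_lt {M : Type*} [CommMonoid M] {n t : ℕ} (a b : M) (h : t ≤ n) :
    ∏ k : Fin n, (if (k : ℕ) < t then a else b) = a ^ t * b ^ (n - t) := by
  rw [Fin.prod_univ_eq_prod_range (fun m => if m < t then a else b),
    ← Finset.prod_range_mul_prod_Ico _ h,
    Finset.prod_congr rfl fun k hk => if_pos (Finset.mem_range.mp hk),
    Finset.prod_congr rfl fun k hk => if_neg (not_lt.mpr (Finset.mem_Ico.mp hk).1)]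
  simp

theorem Complex.exp_neg_pi_div_four_mul_I :
    Complex.exp (-(Real.pi / 4 : ℂ) * Complex.I) = (Real.sqrt 2 / 2 : ℂ) * (1 - Complex.I) := by
  rw [show -(Real.pi / 4 : ℂ) = ((-(Real.pi / 4) : ℝ) : ℂ) by push_cast; ring, Complex.exp_mul_I,
    ← Complex.ofReal_cos, ← Complex.ofReal_sin, Real.cos_neg, Real.sin_neg, Real.cos_pi_div_four,
    Real.sin_pi_div_four]
  push_cast
  ring

theorem Complex.ofReal_sqrt_two_sq : (Real.sqrt 2 : ℂ) ^ 2 = 2 := by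
  rw [← Complex.ofReal_pow, Real.sq_sqrt zero_le_two]
  norm_num

def tAmp : Fin 2 → ℂ :=
  fun x => if x = 0 then (Real.sqrt 2 : ℂ)⁻¹
    else Complex.exp (-(Real.pi / 4 : ℂ) * Complex.I) * (Real.sqrt 2 : ℂ)⁻¹

def zeroAmp : Fin 2 → ℂ := fun x => if x = 0 then 1 else 0

theorem psiTprod_eq_prod (n t : ℕ) :
    psiTprod n t = fun i => ∏ k : Fin n, (if (k : ℕ) < t then tAmp else zeroAmp) (i k) := by
  funext i
  refine Finset.prod_congr rfl fun k _ => ?_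
  split <;> rfl

theorem tAmp_zero : tAmp 0 = (Real.sqrt 2 : ℂ)⁻¹ := rfl

theorem tAmp_one : tAmp 1 = (1 - Complex.I) / 2 := by
  have h : (Real.sqrt 2 : ℂ) ≠ 0 := by simp
  simp only [tAmp, one_ne_zero, if_false, Complex.exp_neg_pi_div_four_mul_I]
  field_simp

theorem pauliExpect_zeroAmp : pauliExpect zeroAmp = ![1, 0, 1, 0] := by
  funext b
  fin_cases b <;> simp [pauliExpect_apply, zeroAmp, pauliMat]

theorem pauliExpect_tAmp :
    pauliExpect tAmp = ![1, ((Real.sqrt 2 / 2 : ℝ) : ℂ), 0, -((Real.sqrt 2 / 2 : ℝ) : ℂ)] := by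
  have h : (Real.sqrt 2 : ℂ) ≠ 0 := by simp
  funext b
  fin_cases b <;>
    simp [pauliExpect_apply, Fin.sum_univ_two, pauliMat, tAmp_zero, tAmp_one, map_ofNat] <;>
    field_simp <;> grind [Complex.ofReal_sqrt_two_sq, Complex.I_sq]

theorem sum_norm_pauliExpect_zeroAmp_pow_six : ∑ b, ‖pauliExpect zeroAmp b‖ ^ 6 = 2 := by
  rw [pauliExpect_zeroAmp]
  simp [Fin.sum_univ_four]
  norm_num

theorem sum_norm_pauliExpect_tAmp_pow_six : ∑ b, ‖pauliExpect tAmp b‖ ^ 6 = 5 / 4 := by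
  have h : (Real.sqrt 2 / 2) ^ 6 = (1 / 8 : ℝ) := by
    rw [div_pow, show Real.sqrt 2 ^ 6 = (Real.sqrt 2 ^ 2) ^ 3 by ring, Real.sq_sqrt zero_le_two]
    norm_num
  rw [pauliExpect_tAmp]
  simp only [Fin.sum_univ_four, Matrix.cons_val, norm_neg, Complex.norm_real, norm_zero, norm_one,
    Real.norm_of_nonneg (by positivity : 0 ≤ Real.sqrt 2 / 2), h]
  norm_num

theorem amom_three_proj_psiTprod {n t : ℕ} (ht : t ≤ n) :
    Amom 3 (proj (psiTprod n t)) = (5 / 8 : ℝ) ^ t := by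
  have hqubit : ∀ k : Fin n,
      ∑ b, ‖pauliExpect (if (k : ℕ) < t then tAmp else zeroAmp) b‖ ^ (2 * 3 : ℝ) =
        if (k : ℕ) < t then 5 / 4 else 2 := by
    intro k
    simp only [show (2 * 3 : ℝ) = (6 : ℕ) by norm_num, Real.rpow_natCast]
    split_ifs
    exacts [sum_norm_pauliExpect_tAmp_pow_six, sum_norm_pauliExpect_zeroAmp_pow_six]
  rw [psiTprod_eq_prod, amom_proj_prod, Finset.prod_congr rfl fun k _ => hqubit k,
    Fin.prod_ite_val_lt _ _ ht]
  obtain ⟨m, rfl⟩ := Nat.exists_eq_add_of_le ht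
  rw [Nat.add_sub_cancel_left, pow_add, div_pow, div_pow]
  field_simp
  rw [← mul_pow]
  norm_num

/-- `A₃(|ψ_t⟩⟨ψ_t|) = (5/8)^t`, equivalently
`-(1/2) ln A₃(|ψ_t⟩⟨ψ_t|) = (t/2) ln(8/5)`. -/
theorem A3_T_product (n t : ℕ) (ht : t ≤ n) :
    Amom 3 (proj (psiTprod n t)) = (5/8 : ℝ)^t ∧
    -(1/2 : ℝ) * Real.log (Amom 3 (proj (psiTprod n t))) =
      ((t : ℝ)/2) * Real.log (8/5) := by
  rw [amom_three_proj_psiTprod ht, Real.log_pow, ← inv_div, Real.log_inv]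
  exact ⟨rfl, by ring⟩

end
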